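/- arXiv:2601.22107 — 2 statements merged into one kernel-verified Lean document; each statement's English description precedes it below -/
import Mathlib

section
/- (Theorem 1, line-integral form.) Let N be a positive natural number. Let f_prior : ℝ^{N×N} → ℝ^{N×N} be permutation-equivariant, and let v : ℝ^{N×N} × [0,1] → ℝ^{N×N} be permutation-equivariant in its first argument (v(Pᵀ X P, t) = Pᵀ v(X, t) P for every permutation matrix P, every X, and every t) and such that t ↦ ⟨v(A_t, t), A₁ − A₀⟩_F is integrable on [0,1] along the paths considered. For A₁, ξ ∈ ℝ^{N×N}, set A₀ = ξ ⊙ A₁ + (J − ξ) ⊙ f_prior(ξ ⊙ A₁), A_t = (1 − t) A₀ + t A₁, and define F(A₁, ξ) = −∫₀¹ ⟨v(A_t, t), A₁ − A₀⟩_F dt. Then for every N × N permutation matrix P, F(Pᵀ A₁ P, Pᵀ ξ P) = F(A₁, ξ); that is, the line-integral functional defining the estimated log-density is permutation-invariant. -/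
open scoped Matrix
open MeasureTheory

/-- `P` is the permutation matrix of some permutation `σ` of `Fin N`. -/
def IsPermMatrix {N : ℕ} (P : Matrix (Fin N) (Fin N) ℝ) : Prop :=
  ∃ σ : Equiv.Perm (Fin N), ∀ i j, P i j = if σ i = j then 1 else 0

/-- The all-ones `N × N` matrix. -/
def allOnes (N : ℕ) : Matrix (Fin N) (Fin N) ℝ := Matrix.of fun _ _ => 1

/-- The prior-informed initialization
`A₀(A₁, ξ) = ξ ⊙ A₁ + (J − ξ) ⊙ f_prior(ξ ⊙ A₁)`. -/
def priorInit {N : ℕ} (fprior : Matrix (Fin N) (Fin N) ℝ → Matrix (Fin N) (Fin N) ℝ)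
    (A₁ ξ : Matrix (Fin N) (Fin N) ℝ) : Matrix (Fin N) (Fin N) ℝ :=
  ξ ⊙ A₁ + (allOnes N - ξ) ⊙ fprior (ξ ⊙ A₁)

/-- The Frobenius inner product `⟨X, Y⟩_F = tr(Xᵀ Y)`. -/
def frobInner {N : ℕ} (X Y : Matrix (Fin N) (Fin N) ℝ) : ℝ :=
  Matrix.trace (Xᵀ * Y)

/-- The line-integral functional
`F(A₁, ξ) = −∫₀¹ ⟨v(A_t, t), A₁ − A₀⟩_F dt` along the prior-informed
rectified-flow path `A_t = (1 − t) A₀ + t A₁`. -/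
noncomputable def lineIntegralF {N : ℕ}
    (fprior : Matrix (Fin N) (Fin N) ℝ → Matrix (Fin N) (Fin N) ℝ)
    (v : Matrix (Fin N) (Fin N) ℝ → ℝ → Matrix (Fin N) (Fin N) ℝ)
    (A₁ ξ : Matrix (Fin N) (Fin N) ℝ) : ℝ :=
  -∫ t in (0:ℝ)..1,
    frobInner (v ((1 - t) • priorInit fprior A₁ ξ + t • A₁) t) (A₁ - priorInit fprior A₁ ξ)

/-! Conjugating by a permutation matrix only relabels rows and columns simultaneously. The prior
initialization, the straight path `A_t` and (for `t ∈ [0, 1]`) the velocity field all commute with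
such a relabeling, and the Frobenius inner product is invariant under it, so the two integrands
defining `F` agree pointwise on `[0, 1]`. -/

namespace Matrix

theorem trace_submatrix_equiv {m n R : Type*} [Fintype m] [Fintype n] [AddCommMonoid R]
    (e : m ≃ n) (M : Matrix n n R) : (M.submatrix e e).trace = M.trace :=
  e.sum_comp M.diag

end Matrix

theorem Equiv.Perm.transpose_permMatrix_mul_mul {n R : Type*} [Fintype n] [DecidableEq n]
    [NonAssocSemiring R] (σ : Equiv.Perm n) (X : Matrix n n R) :
    (σ.permMatrix R)ᵀ * X * σ.permMatrix R = X.submatrix σ.symm σ.symm := by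
  rw [Matrix.transpose_permMatrix, Equiv.Perm.permMatrix, Equiv.Perm.permMatrix,
    PEquiv.toMatrix_toPEquiv_mul, PEquiv.mul_toMatrix_toPEquiv]
  rfl

theorem IsPermMatrix.eq_permMatrix {N : ℕ} {P : Matrix (Fin N) (Fin N) ℝ} (hP : IsPermMatrix P) :
    ∃ σ : Equiv.Perm (Fin N), P = σ.permMatrix ℝ := by
  obtain ⟨σ, hσ⟩ := hP
  refine ⟨σ, Matrix.ext fun i j => ?_⟩
  simp [hσ, PEquiv.toMatrix_apply]

theorem IsPermMatrix.exists_transpose_mul_mul_eq_submatrix {N : ℕ} {P : Matrix (Fin N) (Fin N) ℝ}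
    (hP : IsPermMatrix P) :
    ∃ e : Equiv.Perm (Fin N), ∀ X : Matrix (Fin N) (Fin N) ℝ, Pᵀ * X * P = X.submatrix e e := by
  obtain ⟨σ, rfl⟩ := hP.eq_permMatrix
  exact ⟨σ.symm, σ.transpose_permMatrix_mul_mul⟩

section Relabel

variable {N : ℕ} (e : Equiv.Perm (Fin N))

theorem frobInner_submatrix (X Y : Matrix (Fin N) (Fin N) ℝ) :
    frobInner (X.submatrix e e) (Y.submatrix e e) = frobInner X Y := by
  rw [frobInner, Matrix.transpose_submatrix, Matrix.submatrix_mul_equiv,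
    Matrix.trace_submatrix_equiv, frobInner]

variable {fprior : Matrix (Fin N) (Fin N) ℝ → Matrix (Fin N) (Fin N) ℝ}

theorem priorInit_submatrix
    (hf : ∀ X, fprior (X.submatrix e e) = (fprior X).submatrix e e)
    (A₁ ξ : Matrix (Fin N) (Fin N) ℝ) :
    priorInit fprior (A₁.submatrix e e) (ξ.submatrix e e) = (priorInit fprior A₁ ξ).submatrix e e := by
  rw [priorInit, ← Matrix.submatrix_hadamard, hf]
  rfl

theorem lineIntegralF_submatrix {v : Matrix (Fin N) (Fin N) ℝ → ℝ → Matrix (Fin N) (Fin N) ℝ}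
    (hf : ∀ X, fprior (X.submatrix e e) = (fprior X).submatrix e e)
    (hv : ∀ X, ∀ t ∈ Set.Icc (0 : ℝ) 1, v (X.submatrix e e) t = (v X t).submatrix e e)
    (A₁ ξ : Matrix (Fin N) (Fin N) ℝ) :
    lineIntegralF fprior v (A₁.submatrix e e) (ξ.submatrix e e) = lineIntegralF fprior v A₁ ξ := by
  rw [lineIntegralF, lineIntegralF, priorInit_submatrix e hf]
  congr 1
  refine intervalIntegral.integral_congr fun t ht => ?_
  rw [Set.uIcc_of_le zero_le_one] at ht
  conv_rhs => rw [← frobInner_submatrix e, ← hv _ t ht]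
  rfl

end Relabel

theorem lineIntegralF_perm_invariant_general (N : ℕ)
    (fprior : Matrix (Fin N) (Fin N) ℝ → Matrix (Fin N) (Fin N) ℝ)
    (v : Matrix (Fin N) (Fin N) ℝ → ℝ → Matrix (Fin N) (Fin N) ℝ)
    (hfprior : ∀ Q : Matrix (Fin N) (Fin N) ℝ, IsPermMatrix Q →
      ∀ X : Matrix (Fin N) (Fin N) ℝ, fprior (Qᵀ * X * Q) = Qᵀ * fprior X * Q)
    (hv : ∀ Q : Matrix (Fin N) (Fin N) ℝ, IsPermMatrix Q →
      ∀ (X : Matrix (Fin N) (Fin N) ℝ) (t : ℝ), t ∈ Set.Icc (0:ℝ) 1 →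
        v (Qᵀ * X * Q) t = Qᵀ * v X t * Q)
    (A₁ ξ : Matrix (Fin N) (Fin N) ℝ)
    (P : Matrix (Fin N) (Fin N) ℝ) (hP : IsPermMatrix P) :
    lineIntegralF fprior v (Pᵀ * A₁ * P) (Pᵀ * ξ * P) = lineIntegralF fprior v A₁ ξ := by
  obtain ⟨e, hconj⟩ := hP.exists_transpose_mul_mul_eq_submatrix
  rw [hconj, hconj]
  refine lineIntegralF_submatrix e (fun X => ?_) (fun X t ht => ?_) A₁ ξ
  · rw [← hconj, hfprior P hP, hconj]
  · rw [← hconj, hv P hP X t ht, hconj]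

/-- Theorem 1, line-integral form: if the prior is permutation-equivariant and
the velocity field is permutation-equivariant in its first argument (and the
Frobenius integrand is integrable along the paths considered), then the
line-integral functional defining the estimated log-density is
permutation-invariant. -/
theorem lineIntegralF_perm_invariant (N : ℕ) (hN : 0 < N)
    (fprior : Matrix (Fin N) (Fin N) ℝ → Matrix (Fin N) (Fin N) ℝ)
    (v : Matrix (Fin N) (Fin N) ℝ → ℝ → Matrix (Fin N) (Fin N) ℝ)
    (hfprior : ∀ Q : Matrix (Fin N) (Fin N) ℝ, IsPermMatrix Q →
      ∀ X : Matrix (Fin N) (Fin N) ℝ, fprior (Qᵀ * X * Q) = Qᵀ * fprior X * Q)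
    (hv : ∀ Q : Matrix (Fin N) (Fin N) ℝ, IsPermMatrix Q →
      ∀ (X : Matrix (Fin N) (Fin N) ℝ) (t : ℝ), t ∈ Set.Icc (0:ℝ) 1 →
        v (Qᵀ * X * Q) t = Qᵀ * v X t * Q)
    (hint : ∀ A₁ ξ : Matrix (Fin N) (Fin N) ℝ,
      IntervalIntegrable
        (fun t => frobInner (v ((1 - t) • priorInit fprior A₁ ξ + t • A₁) t)
          (A₁ - priorInit fprior A₁ ξ)) volume 0 1)
    (A₁ ξ : Matrix (Fin N) (Fin N) ℝ)
    (P : Matrix (Fin N) (Fin N) ℝ) (hP : IsPermMatrix P) :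
    lineIntegralF fprior v (Pᵀ * A₁ * P) (Pᵀ * ξ * P) = lineIntegralF fprior v A₁ ξ :=
  lineIntegralF_perm_invariant_general N fprior v hfprior hv A₁ ξ P hP
end

section
/- (Theorem 1, divergence form.) Let N be a positive natural number. Let g : ℝ^{N×N} → ℝ be permutation-invariant (g(Pᵀ X P) = g(X) for every permutation matrix P and every X), let f_prior : ℝ^{N×N} → ℝ^{N×N} be permutation-equivariant, and let v : ℝ^{N×N} × [0,1] → ℝ^{N×N} be permutation-equivariant in its first argument and continuously Fréchet differentiable in its first argument. For A₁, ξ ∈ ℝ^{N×N}, set A₀ = ξ ⊙ A₁ + (J − ξ) ⊙ f_prior(ξ ⊙ A₁), A_t = (1 − t) A₀ + t A₁, and define the estimated log-density L(A₁, ξ) = g(A₀) − ∫₀¹ tr(D₁v(A_t, t)) dt, where D₁v(·, t) is the Fréchet derivative of v(·, t) viewed as a linear endomorphism of ℝ^{N×N}. Then for every N × N permutation matrix P, L(Pᵀ A₁ P, Pᵀ ξ P) = L(A₁, ξ); that is, the estimated density is permutation-invariant. -/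
open scoped Matrix
open MeasureTheory

attribute [local instance] Matrix.normedAddCommGroup Matrix.normedSpace

/-- The estimated log-density
`L(A₁, ξ) = g(A₀) − ∫₀¹ tr(D₁v(A_t, t)) dt` along the prior-informed
rectified-flow path `A_t = (1 − t) A₀ + t A₁`, where `D₁v(·, t)` is the
Fréchet derivative of `v(·, t)` viewed as a linear endomorphism. -/
noncomputable def estLogDensity {N : ℕ}
    (g : Matrix (Fin N) (Fin N) ℝ → ℝ)
    (fprior : Matrix (Fin N) (Fin N) ℝ → Matrix (Fin N) (Fin N) ℝ)
    (v : Matrix (Fin N) (Fin N) ℝ → ℝ → Matrix (Fin N) (Fin N) ℝ)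
    (A₁ ξ : Matrix (Fin N) (Fin N) ℝ) : ℝ :=
  g (priorInit fprior A₁ ξ) -
    ∫ t in (0:ℝ)..1,
      LinearMap.trace ℝ (Matrix (Fin N) (Fin N) ℝ)
        ((fderiv ℝ (fun X => v X t) ((1 - t) • priorInit fprior A₁ ξ + t • A₁)) :
          Matrix (Fin N) (Fin N) ℝ →ₗ[ℝ] Matrix (Fin N) (Fin N) ℝ)

/-!
Conjugation `e : X ↦ Pᵀ X P` by the matrix of `σ` is the linear reindexing
`X ↦ X.submatrix σ⁻¹ σ⁻¹`. It commutes with Hadamard products and fixes `J`, so an equivariant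
prior makes `A₀`, hence the whole path `A_t`, equivariant. An equivariant field satisfies
`v(·, t) = e ∘ v(·, t) ∘ e⁻¹`, so its derivative at `e A_t` is `e ∘ D₁v(A_t, t) ∘ e⁻¹`, which has
the same trace.
-/

theorem trace_fderiv_apply_of_commute {𝕜 E : Type*} [NontriviallyNormedField 𝕜]
    [NormedAddCommGroup E] [NormedSpace 𝕜 E] {f : E → E} (e : E ≃L[𝕜] E)
    (h : Function.Commute f e) (x : E) :
    LinearMap.trace 𝕜 E (fderiv 𝕜 f (e x)) = LinearMap.trace 𝕜 E (fderiv 𝕜 f x) := by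
  have hconj : f = e ∘ f ∘ e.symm := by
    funext y
    simpa using h (e.symm y)
  have hderiv : fderiv 𝕜 f (e x) =
      (e : E →L[𝕜] E).comp ((fderiv 𝕜 f x).comp (e.symm : E →L[𝕜] E)) := by
    conv_lhs => rw [hconj]
    rw [e.comp_fderiv, e.symm.comp_right_fderiv, e.symm_apply_apply]
  rw [hderiv, ← LinearMap.trace_conj' (fderiv 𝕜 f x : E →ₗ[𝕜] E) e.toLinearEquiv]
  rfl

theorem IsPermMatrix.exists_transpose_mul_mul_eq_reindex {N : ℕ} {P : Matrix (Fin N) (Fin N) ℝ}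
    (hP : IsPermMatrix P) :
    ∃ σ : Equiv.Perm (Fin N), ∀ X, Pᵀ * X * P = Matrix.reindex σ σ X := by
  obtain ⟨σ, hσ⟩ := hP
  have hP : P = σ.permMatrix ℝ := by
    ext i j
    simp [hσ, PEquiv.toMatrix_apply]
  refine ⟨σ, fun X => ?_⟩
  rw [hP, Matrix.transpose_permMatrix, PEquiv.toMatrix_toPEquiv_mul,
    PEquiv.mul_toMatrix_toPEquiv]
  rfl

section Reindex

variable {N : ℕ} (σ : Equiv.Perm (Fin N))

theorem priorInit_reindex {fprior : Matrix (Fin N) (Fin N) ℝ → Matrix (Fin N) (Fin N) ℝ}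
    (hfprior : Function.Commute fprior (Matrix.reindex σ σ)) (A₁ ξ : Matrix (Fin N) (Fin N) ℝ) :
    priorInit fprior (Matrix.reindex σ σ A₁) (Matrix.reindex σ σ ξ) =
      Matrix.reindex σ σ (priorInit fprior A₁ ξ) := by
  have hmask : Matrix.reindex σ σ ξ ⊙ Matrix.reindex σ σ A₁ = Matrix.reindex σ σ (ξ ⊙ A₁) := rfl
  rw [priorInit, priorInit, hmask, hfprior.eq]
  rfl

theorem estLogDensity_reindex {g : Matrix (Fin N) (Fin N) ℝ → ℝ}
    {fprior : Matrix (Fin N) (Fin N) ℝ → Matrix (Fin N) (Fin N) ℝ}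
    {v : Matrix (Fin N) (Fin N) ℝ → ℝ → Matrix (Fin N) (Fin N) ℝ}
    (hg : ∀ X, g (Matrix.reindex σ σ X) = g X)
    (hfprior : Function.Commute fprior (Matrix.reindex σ σ))
    (hv : ∀ t, Function.Commute (v · t) (Matrix.reindex σ σ)) (A₁ ξ : Matrix (Fin N) (Fin N) ℝ) :
    estLogDensity g fprior v (Matrix.reindex σ σ A₁) (Matrix.reindex σ σ ξ) =
      estLogDensity g fprior v A₁ ξ := by
  let e := (Matrix.reindexLinearEquiv ℝ ℝ σ σ).toContinuousLinearEquiv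
  rw [estLogDensity, estLogDensity, priorInit_reindex σ hfprior, hg]
  congr 2 with t
  -- the conjugated path is `e` applied to the original one
  exact trace_fderiv_apply_of_commute e (hv t) ((1 - t) • priorInit fprior A₁ ξ + t • A₁)

end Reindex

theorem estLogDensity_perm_invariant_general (N : ℕ)
    (g : Matrix (Fin N) (Fin N) ℝ → ℝ)
    (fprior : Matrix (Fin N) (Fin N) ℝ → Matrix (Fin N) (Fin N) ℝ)
    (v : Matrix (Fin N) (Fin N) ℝ → ℝ → Matrix (Fin N) (Fin N) ℝ)
    (hg : ∀ Q : Matrix (Fin N) (Fin N) ℝ, IsPermMatrix Q →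
      ∀ X : Matrix (Fin N) (Fin N) ℝ, g (Qᵀ * X * Q) = g X)
    (hfprior : ∀ Q : Matrix (Fin N) (Fin N) ℝ, IsPermMatrix Q →
      ∀ X : Matrix (Fin N) (Fin N) ℝ, fprior (Qᵀ * X * Q) = Qᵀ * fprior X * Q)
    (hv : ∀ Q : Matrix (Fin N) (Fin N) ℝ, IsPermMatrix Q →
      ∀ (X : Matrix (Fin N) (Fin N) ℝ) (t : ℝ), v (Qᵀ * X * Q) t = Qᵀ * v X t * Q)
    (A₁ ξ : Matrix (Fin N) (Fin N) ℝ)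
    (P : Matrix (Fin N) (Fin N) ℝ) (hP : IsPermMatrix P) :
    estLogDensity g fprior v (Pᵀ * A₁ * P) (Pᵀ * ξ * P) =
      estLogDensity g fprior v A₁ ξ := by
  obtain ⟨σ, hσ⟩ := hP.exists_transpose_mul_mul_eq_reindex
  rw [hσ, hσ]
  refine estLogDensity_reindex σ (fun X => ?_) (fun X => ?_) (fun t X => ?_) A₁ ξ
  · rw [← hσ, hg P hP]
  · rw [← hσ, ← hσ, hfprior P hP]
  · beta_reduce
    rw [← hσ, ← hσ, hv P hP]

/-- Theorem 1, divergence form: if `g` is permutation-invariant, the prior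
is permutation-equivariant, and the velocity field is permutation-equivariant
and continuously Fréchet differentiable in its first argument, then the
estimated log-density is permutation-invariant. -/
theorem estLogDensity_perm_invariant (N : ℕ) (hN : 0 < N)
    (g : Matrix (Fin N) (Fin N) ℝ → ℝ)
    (fprior : Matrix (Fin N) (Fin N) ℝ → Matrix (Fin N) (Fin N) ℝ)
    (v : Matrix (Fin N) (Fin N) ℝ → ℝ → Matrix (Fin N) (Fin N) ℝ)
    (hg : ∀ Q : Matrix (Fin N) (Fin N) ℝ, IsPermMatrix Q →
      ∀ X : Matrix (Fin N) (Fin N) ℝ, g (Qᵀ * X * Q) = g X)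
    (hfprior : ∀ Q : Matrix (Fin N) (Fin N) ℝ, IsPermMatrix Q →
      ∀ X : Matrix (Fin N) (Fin N) ℝ, fprior (Qᵀ * X * Q) = Qᵀ * fprior X * Q)
    (hv : ∀ Q : Matrix (Fin N) (Fin N) ℝ, IsPermMatrix Q →
      ∀ (X : Matrix (Fin N) (Fin N) ℝ) (t : ℝ), v (Qᵀ * X * Q) t = Qᵀ * v X t * Q)
    (hvdiff : ∀ t : ℝ, ContDiff ℝ 1 (fun X => v X t))
    (A₁ ξ : Matrix (Fin N) (Fin N) ℝ)
    (P : Matrix (Fin N) (Fin N) ℝ) (hP : IsPermMatrix P) :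
    estLogDensity g fprior v (Pᵀ * A₁ * P) (Pᵀ * ξ * P) =
      estLogDensity g fprior v A₁ ξ :=
  estLogDensity_perm_invariant_general N g fprior v hg hfprior hv A₁ ξ P hP
end
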